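/- Assume in addition that Δ_k ≠ 0 for all k ≥ 1. Then for every n ≥ 1 the relation P_n(a_n) · P_n(b_n) = (Δ_n/Δ_{n+1}) · κ_n · (1 − κ_n/κ_{n−1}) holds. -/

import Mathlib

open Polynomial

/-- `Apoly a n = ∏_{k=1}^n (z - a_k)`. -/
noncomputable def Apoly (a : ℕ → ℂ) (n : ℕ) : Polynomial ℂ :=
  ∏ k ∈ Finset.range n, (X - C (a (k + 1)))

/-- Moments `c_{nm} = σ(1/(A_n B_m))`. -/
noncomputable def momC (σ : RatFunc ℂ →ₗ[ℂ] ℂ) (a b : ℕ → ℂ) (n m : ℕ) : ℂ :=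
  σ (1 / algebraMap (Polynomial ℂ) (RatFunc ℂ) (Apoly a n * Apoly b m))

/-- `Δ_0 = 1`, `Δ_n = det (c_{ij})_{0 ≤ i,j ≤ n-1}`. -/
noncomputable def DeltaDet (σ : RatFunc ℂ →ₗ[ℂ] ℂ) (a b : ℕ → ℂ) (n : ℕ) : ℂ :=
  Matrix.det (Matrix.of fun i j : Fin n => momC σ a b (i : ℕ) (j : ℕ))

/-!
Expand `P_n` in the Newton basis `A_n / A_k`: `P_n = ∑_{k ≤ n} d_k A_n / A_k` with `d_0 = 1` and
`d_n = P_n(a_n)`. Testing the orthogonality relation against `q = B_n / B_j` (`j ≤ n`) shows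
`d ᵥ* M = κ_n e_0` for the moment matrix `M = (c_{ij})_{i,j ≤ n}`; expanding in the basis
`B_n / B_k` instead gives `M *ᵥ w = κ_n e_0` with `w_n = P_n(b_n)`, and `P_{n-1}` gives such a
`w'` for the leading minor, with `κ_{n-1}`. Extend `w'` by zero to `v`, so that
`M *ᵥ v = κ_{n-1} e_0 + α e_n`. Pairing with `d` gives `P_n(a_n) α = κ_n - κ_{n-1}`, while
Cramer's rule for `M *ᵥ (κ_n v - κ_{n-1} w) = κ_n α e_n` gives
`κ_{n-1} P_n(b_n) Δ_{n+1} = -κ_n α Δ_n`. Combining the two eliminates `α`.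
-/

open Finset Matrix

namespace Matrix

variable {R : Type*} [CommRing R] {m : ℕ}

theorem det_updateCol_last_single (M : Matrix (Fin (m + 1)) (Fin (m + 1)) R) (c : R) :
    (M.updateCol (Fin.last m) (Pi.single (Fin.last m) c)).det =
      c * (M.submatrix Fin.castSucc Fin.castSucc).det := by
  rw [det_succ_column _ (Fin.last m), Finset.sum_eq_single (Fin.last m)]
  · simp only [Fin.succAbove_last, updateCol_self, Pi.single_eq_same, ← two_mul, pow_mul,
      neg_one_sq, one_pow, one_mul]
    congr 2
    ext i j
    simp [(Fin.castSucc_lt_last j).ne]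
  · intro i _ hi
    simp [hi]
  · simp

theorem apply_last_mul_det_of_mulVec_eq_single_last {M : Matrix (Fin (m + 1)) (Fin (m + 1)) R}
    {v : Fin (m + 1) → R} {c : R} (h : M *ᵥ v = Pi.single (Fin.last m) c) :
    v (Fin.last m) * M.det = c * (M.submatrix Fin.castSucc Fin.castSucc).det := by
  have hcramer := congrFun (cramer_eq_adjugate_mulVec M (M *ᵥ v)) (Fin.last m)
  rw [mulVec_mulVec, adjugate_mul, smul_mulVec, one_mulVec, h, cramer_apply,
    det_updateCol_last_single] at hcramer
  rw [hcramer, Pi.smul_apply, smul_eq_mul, mul_comm]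

theorem mulVec_snoc_zero_castSucc (M : Matrix (Fin (m + 1)) (Fin (m + 1)) R) (v : Fin m → R)
    (i : Fin m) :
    (M *ᵥ Fin.snoc v 0) i.castSucc = (M.submatrix Fin.castSucc Fin.castSucc *ᵥ v) i := by
  simp [mulVec, dotProduct, Fin.sum_univ_castSucc]

theorem last_mul_last_mul_det_eq {M : Matrix (Fin (m + 2)) (Fin (m + 2)) R} {κ κ' : R}
    {y w : Fin (m + 2) → R} {w' : Fin (m + 1) → R}
    (hy : y ᵥ* M = Pi.single 0 κ) (hy0 : y 0 = 1) (hw : M *ᵥ w = Pi.single 0 κ)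
    (hw' : M.submatrix Fin.castSucc Fin.castSucc *ᵥ w' = Pi.single 0 κ') (hw'0 : w' 0 = 1) :
    κ' * (y (Fin.last _) * w (Fin.last _)) * M.det =
      κ * (κ' - κ) * (M.submatrix Fin.castSucc Fin.castSucc).det := by
  set v : Fin (m + 2) → R := Fin.snoc w' 0
  set α := (M *ᵥ v) (Fin.last _)
  have hv : M *ᵥ v = Pi.single 0 κ' + Pi.single (Fin.last _) α := by
    ext i
    induction i using Fin.lastCases with
    | last => simp [α]
    | cast i => simp [v, mulVec_snoc_zero_castSucc, hw', Pi.single_apply]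
  have hyα : y (Fin.last _) * α = κ - κ' := by
    have h := dotProduct_mulVec y M v
    rw [hv, hy, dotProduct_add, dotProduct_single, dotProduct_single, single_dotProduct, hy0] at h
    simp only [one_mul, Fin.snoc_apply_zero, hw'0, mul_one, v] at h
    linear_combination h
  have hu : M *ᵥ (κ • v - κ' • w) = Pi.single (Fin.last _) (κ * α) := by
    rw [mulVec_sub, mulVec_smul, mulVec_smul, hv, hw]
    ext i
    simp only [Pi.sub_apply, Pi.add_apply, Pi.smul_apply, smul_eq_mul, Pi.single_apply]
    split_ifs <;> ring
  have hcramer := apply_last_mul_det_of_mulVec_eq_single_last hu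
  simp only [Pi.sub_apply, Pi.smul_apply, Fin.snoc_last, smul_eq_mul, mul_zero, zero_sub,
    neg_mul, v] at hcramer
  linear_combination
    (-y (Fin.last _)) * hcramer - κ * (M.submatrix Fin.castSucc Fin.castSucc).det * hyα

end Matrix

/-- `ApolyIco a k n = A_n / A_k`. -/
noncomputable def ApolyIco {R : Type*} [CommRing R] (a : ℕ → R) (k n : ℕ) : R[X] :=
  ∏ m ∈ Ico k n, (X - C (a (m + 1)))

section ApolyIco

variable {R : Type*} [CommRing R]

theorem ApolyIco_monic (a : ℕ → R) (k n : ℕ) : (ApolyIco a k n).Monic :=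
  monic_prod_of_monic _ _ fun _ _ => monic_X_sub_C _

theorem ApolyIco_succ_right (a : ℕ → R) {k n : ℕ} (h : k ≤ n) :
    ApolyIco a k (n + 1) = ApolyIco a k n * (X - C (a (n + 1))) :=
  prod_Ico_succ_top h _

theorem natDegree_ApolyIco [Nontrivial R] (a : ℕ → R) (k n : ℕ) :
    (ApolyIco a k n).natDegree = n - k := by
  rw [ApolyIco, natDegree_prod_of_monic _ _ fun _ _ => monic_X_sub_C _]
  simp

theorem exists_sum_C_mul_ApolyIco (a : ℕ → R) {n : ℕ} {Q : R[X]} (hQ : Q.Monic)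
    (hdeg : Q.natDegree = n) :
    ∃ d : ℕ → R, d 0 = 1 ∧ d n = Q.eval (a n) ∧
      Q = ∑ k ∈ range (n + 1), C (d k) * ApolyIco a k n := by
  nontriviality R
  induction n generalizing Q with
  | zero =>
    obtain rfl : Q = 1 := (hQ.natDegree_eq_zero).mp hdeg
    exact ⟨fun _ => 1, rfl, by simp, by simp [ApolyIco]⟩
  | succ n ih =>
    set r := a (n + 1)
    have hQT : Q = (X - C r) * (Q /ₘ (X - C r)) + C (Q.eval r) := by
      rw [← modByMonic_X_sub_C_eq_C_eval, add_comm]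
      exact (modByMonic_add_div Q (X - C r)).symm
    have hTmonic : (Q /ₘ (X - C r)).Monic := by
      refine (leadingCoeff_divByMonic_of_monic (monic_X_sub_C r) ?_).trans hQ
      rw [degree_X_sub_C, degree_eq_natDegree hQ.ne_zero, hdeg]
      exact_mod_cast Nat.le_add_left 1 n
    have hTdeg : (Q /ₘ (X - C r)).natDegree = n := by
      rw [natDegree_divByMonic _ (monic_X_sub_C r), natDegree_X_sub_C, hdeg, Nat.add_sub_cancel]
    obtain ⟨t, ht0, -, hT⟩ := ih hTmonic hTdeg
    refine ⟨Function.update t (n + 1) (Q.eval r), by simp [ht0], by simp [r], ?_⟩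
    rw [sum_range_succ, Function.update_self, ApolyIco, Ico_self, prod_empty, mul_one]
    nth_rw 1 [hQT, hT, mul_sum]
    congr 1
    refine sum_congr rfl fun k hk => ?_
    have hkn : k ≤ n := Nat.lt_succ_iff.mp (mem_range.mp hk)
    rw [Function.update_of_ne (by omega), ApolyIco_succ_right a hkn]
    ring

end ApolyIco

section Moments

variable (σ : RatFunc ℂ →ₗ[ℂ] ℂ) (a b : ℕ → ℂ)

theorem Apoly_eq_mul_ApolyIco {k n : ℕ} (h : k ≤ n) :
    Apoly a n = Apoly a k * ApolyIco a k n :=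
  (prod_range_mul_prod_Ico _ h).symm

theorem Apoly_monic (n : ℕ) : (Apoly a n).Monic :=
  monic_prod_of_monic _ _ fun _ _ => monic_X_sub_C _

theorem momC_comm (n m : ℕ) :
    momC σ a b n m = momC σ b a m n := by
  rw [momC, momC, mul_comm]

local notation "φ" => algebraMap ℂ[X] (RatFunc ℂ)

def IsOrthogonal (n : ℕ) (Q : ℂ[X]) (κ : ℂ) : Prop :=
  ∀ q : ℂ[X], q.degree ≤ n → σ (φ (Q * q) / φ (Apoly a n * Apoly b n)) = q.coeff n * κ

theorem sum_mul_momC_eq {n j : ℕ} (hj : j ≤ n)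
    {Q : ℂ[X]} {κ : ℂ} {d : ℕ → ℂ}
    (hσ : IsOrthogonal σ a b n Q κ)
    (hQ : Q = ∑ k ∈ range (n + 1), C (d k) * ApolyIco a k n) :
    ∑ k ∈ range (n + 1), d k * momC σ a b k j = if j = 0 then κ else 0 := by
  have hφ (p : ℂ[X]) (hp : p.Monic) : φ p ≠ 0 := RatFunc.algebraMap_ne_zero hp.ne_zero
  have hsum : ∑ k ∈ range (n + 1), d k • (1 / φ (Apoly a k * Apoly b j)) =
      φ (Q * ApolyIco b j n) / φ (Apoly a n * Apoly b n) := by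
    rw [Apoly_eq_mul_ApolyIco b hj, hQ, sum_mul, map_sum, sum_div]
    refine sum_congr rfl fun k hk => ?_
    rw [Apoly_eq_mul_ApolyIco a (Nat.lt_succ_iff.mp (mem_range.mp hk)), Algebra.smul_def,
      IsScalarTower.algebraMap_apply ℂ ℂ[X] (RatFunc ℂ), algebraMap_eq]
    have := hφ _ (Apoly_monic a k)
    have := hφ _ (Apoly_monic b j)
    have := hφ _ (ApolyIco_monic a k n)
    have := hφ _ (ApolyIco_monic b j n)
    simp only [map_mul]
    field_simp
  have hcoeff : (ApolyIco b j n).coeff n = if j = 0 then 1 else 0 := by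
    split_ifs with hj0
    · subst hj0
      simpa [natDegree_ApolyIco] using (ApolyIco_monic b 0 n).coeff_natDegree
    · exact coeff_eq_zero_of_natDegree_lt (by rw [natDegree_ApolyIco]; omega)
  have hdeg : (ApolyIco b j n).degree ≤ n :=
    degree_le_natDegree.trans (by rw [natDegree_ApolyIco]; exact_mod_cast Nat.sub_le n j)
  calc ∑ k ∈ range (n + 1), d k * momC σ a b k j
      = σ (∑ k ∈ range (n + 1), d k • (1 / φ (Apoly a k * Apoly b j))) := by
        simp only [momC, map_sum, map_smul, smul_eq_mul]
    _ = if j = 0 then κ else 0 := by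
        rw [hsum, hσ _ hdeg, hcoeff]
        split_ifs <;> simp

noncomputable def momMatrix (n : ℕ) :
    Matrix (Fin n) (Fin n) ℂ :=
  Matrix.of fun i j => momC σ a b i j

theorem DeltaDet_eq_det_momMatrix (n : ℕ) :
    DeltaDet σ a b n = (momMatrix σ a b n).det :=
  rfl

theorem momMatrix_submatrix_castSucc (n : ℕ) :
    (momMatrix σ a b (n + 1)).submatrix Fin.castSucc Fin.castSucc = momMatrix σ a b n := by
  ext i j
  simp [momMatrix]

theorem momMatrix_transpose (n : ℕ) :
    (momMatrix σ a b n)ᵀ = momMatrix σ b a n := by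
  ext i j
  exact momC_comm σ a b j i

theorem vecMul_momMatrix {n : ℕ} {Q : ℂ[X]}
    {κ : ℂ} {d : ℕ → ℂ}
    (hσ : IsOrthogonal σ a b n Q κ)
    (hQ : Q = ∑ k ∈ range (n + 1), C (d k) * ApolyIco a k n) :
    (fun i : Fin (n + 1) => d i) ᵥ* momMatrix σ a b (n + 1) = Pi.single 0 κ := by
  ext j
  simp only [vecMul, dotProduct, momMatrix, of_apply]
  rw [Fin.sum_univ_eq_sum_range (fun k => d k * momC σ a b k j),
    sum_mul_momC_eq σ a b (Fin.is_le j) hσ hQ]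
  simp only [Pi.single_apply, Fin.ext_iff, Fin.val_zero]

theorem momMatrix_mulVec {n : ℕ} {Q : ℂ[X]}
    {κ : ℂ} {d : ℕ → ℂ}
    (hσ : IsOrthogonal σ a b n Q κ)
    (hQ : Q = ∑ k ∈ range (n + 1), C (d k) * ApolyIco b k n) :
    momMatrix σ a b (n + 1) *ᵥ (fun i : Fin (n + 1) => d i) = Pi.single 0 κ := by
  rw [← Matrix.vecMul_transpose, momMatrix_transpose]
  exact vecMul_momMatrix σ b a (fun q hq => by rw [mul_comm (Apoly b n)]; exact hσ q hq) hQ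

end Moments

theorem stmt3_general (a b : ℕ → ℂ) (P : ℕ → Polynomial ℂ) (κ : ℕ → ℂ)
    (σ : RatFunc ℂ →ₗ[ℂ] ℂ)
    (hPmonic : ∀ n, (P n).Monic) (hPdeg : ∀ n, (P n).natDegree = n)
    (hκ : ∀ n, κ n ≠ 0)
    (hσ : ∀ (n : ℕ) (q : Polynomial ℂ), q.degree ≤ (n : ℕ) →
      σ (algebraMap (Polynomial ℂ) (RatFunc ℂ) (P n * q) /
          algebraMap (Polynomial ℂ) (RatFunc ℂ) (Apoly a n * Apoly b n)) =
        q.coeff n * κ n)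
    (hΔ : ∀ k, 1 ≤ k → DeltaDet σ a b k ≠ 0) :
    ∀ n : ℕ, 1 ≤ n →
      (P n).eval (a n) * (P n).eval (b n) =
        DeltaDet σ a b n / DeltaDet σ a b (n + 1) *
          (κ n * (1 - κ n / κ (n - 1))) := by
  intro n hn
  obtain ⟨m, rfl⟩ : ∃ m, n = m + 1 := ⟨n - 1, by omega⟩
  obtain ⟨y, hy0, hyL, hyQ⟩ := exists_sum_C_mul_ApolyIco a (hPmonic (m + 1)) (hPdeg _)
  obtain ⟨w, -, hwL, hwQ⟩ := exists_sum_C_mul_ApolyIco b (hPmonic (m + 1)) (hPdeg _)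
  obtain ⟨w', hw'0, -, hw'Q⟩ := exists_sum_C_mul_ApolyIco b (hPmonic m) (hPdeg m)
  have hw' := momMatrix_mulVec σ a b (hσ m) hw'Q
  rw [← momMatrix_submatrix_castSucc] at hw'
  have key := Matrix.last_mul_last_mul_det_eq (vecMul_momMatrix σ a b (hσ _) hyQ) hy0
    (momMatrix_mulVec σ a b (hσ _) hwQ) hw' hw'0
  simp only [Fin.val_last, hyL, hwL, momMatrix_submatrix_castSucc,
    ← DeltaDet_eq_det_momMatrix] at key
  have hΔ' := hΔ (m + 2) (by omega)
  have hκ' := hκ m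
  rw [Nat.add_sub_cancel]
  field_simp
  linear_combination key

/-- The relation `P_n(a_n) P_n(b_n) = (Δ_n/Δ_{n+1}) κ_n (1 - κ_n/κ_{n-1})`. -/
theorem stmt3 (a b : ℕ → ℂ) (P : ℕ → Polynomial ℂ) (κ : ℕ → ℂ)
    (σ : RatFunc ℂ →ₗ[ℂ] ℂ)
    (hP0 : P 0 = 1) (hPmonic : ∀ n, (P n).Monic) (hPdeg : ∀ n, (P n).natDegree = n)
    (hκ : ∀ n, κ n ≠ 0)
    (hσ : ∀ (n : ℕ) (q : Polynomial ℂ), q.degree ≤ (n : ℕ) →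
      σ (algebraMap (Polynomial ℂ) (RatFunc ℂ) (P n * q) /
          algebraMap (Polynomial ℂ) (RatFunc ℂ) (Apoly a n * Apoly b n)) =
        q.coeff n * κ n)
    (hΔ : ∀ k, 1 ≤ k → DeltaDet σ a b k ≠ 0) :
    ∀ n : ℕ, 1 ≤ n →
      (P n).eval (a n) * (P n).eval (b n) =
        DeltaDet σ a b n / DeltaDet σ a b (n + 1) *
          (κ n * (1 - κ n / κ (n - 1))) :=
  stmt3_general a b P κ σ hPmonic hPdeg hκ hσ hΔ
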